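/- For every g ∈ Sol there exists exactly one continuous group homomorphism σ : (ℝ,+) → Sol with σ(1) = g; that is, each element of Sol lies on a unique one-parameter subgroup, so the pair (Sol, Γ) is of exponential type for every subgroup Γ. -/

import Mathlib

noncomputable section

/-- The group `Sol`: underlying set `ℝ³` with multiplication
`(x₁,y₁,z₁)·(x₂,y₂,z₂) = (x₁ + e^{z₁}x₂, y₁ + e^{−z₁}y₂, z₁ + z₂)`. -/
def Sol : Type := ℝ × ℝ × ℝ

namespace Sol

instance : TopologicalSpace Sol := inferInstanceAs (TopologicalSpace (ℝ × ℝ × ℝ))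

/-- Build an element of `Sol` from coordinates. -/
def mk (x y z : ℝ) : Sol := ((x, y, z) : ℝ × ℝ × ℝ)

/-- First coordinate. -/
def X (g : Sol) : ℝ := (show ℝ × ℝ × ℝ from g).1
/-- Second coordinate. -/
def Y (g : Sol) : ℝ := (show ℝ × ℝ × ℝ from g).2.1
/-- Third coordinate. -/
def Z (g : Sol) : ℝ := (show ℝ × ℝ × ℝ from g).2.2

theorem ext {a b : Sol} (h1 : X a = X b) (h2 : Y a = Y b) (h3 : Z a = Z b) : a = b :=
  show (show ℝ × ℝ × ℝ from a) = (show ℝ × ℝ × ℝ from b) from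
    Prod.ext h1 (Prod.ext h2 h3)

instance : One Sol := ⟨mk 0 0 0⟩
instance : Mul Sol :=
  ⟨fun a b => mk (X a + Real.exp (Z a) * X b) (Y a + Real.exp (-Z a) * Y b) (Z a + Z b)⟩
instance : Inv Sol :=
  ⟨fun a => mk (-(Real.exp (-Z a) * X a)) (-(Real.exp (Z a) * Y a)) (-Z a)⟩

@[simp] theorem X_mk (x y z : ℝ) : X (mk x y z) = x := rfl
@[simp] theorem Y_mk (x y z : ℝ) : Y (mk x y z) = y := rfl
@[simp] theorem Z_mk (x y z : ℝ) : Z (mk x y z) = z := rfl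

@[simp] theorem X_one : X (1 : Sol) = 0 := rfl
@[simp] theorem Y_one : Y (1 : Sol) = 0 := rfl
@[simp] theorem Z_one : Z (1 : Sol) = 0 := rfl

@[simp] theorem X_mul (a b : Sol) : X (a * b) = X a + Real.exp (Z a) * X b := rfl
@[simp] theorem Y_mul (a b : Sol) : Y (a * b) = Y a + Real.exp (-Z a) * Y b := rfl
@[simp] theorem Z_mul (a b : Sol) : Z (a * b) = Z a + Z b := rfl

@[simp] theorem X_inv (a : Sol) : X a⁻¹ = -(Real.exp (-Z a) * X a) := rfl
@[simp] theorem Y_inv (a : Sol) : Y a⁻¹ = -(Real.exp (Z a) * Y a) := rfl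
@[simp] theorem Z_inv (a : Sol) : Z a⁻¹ = -Z a := rfl

instance : Group Sol :=
  Group.ofLeftAxioms
    (fun a b c => ext
      (by simp [Real.exp_add]; ring)
      (by simp [Real.exp_add, neg_add]; ring)
      (by simp; ring))
    (fun a => ext (by simp) (by simp) (by simp))
    (fun a => ext (by simp) (by simp) (by simp))

/-- A (continuous) one-parameter subgroup of `Sol`: a continuous group homomorphism
from `(ℝ,+)` to `Sol`. -/
def IsOneParam (σ : ℝ → Sol) : Prop :=
  Continuous σ ∧ ∀ s t : ℝ, σ (s + t) = σ s * σ t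

/-- A pair of points `m₁ m₂` of the homogeneous space `Sol ⧸ Γ` is blockable if some finite
set `B` avoiding `m₁, m₂` meets every connecting curve `t ↦ σ(t)•m₁`, `t ∈ [0,1]`, where
`σ` is a one-parameter subgroup with `σ(1)•m₁ = m₂`. -/
def Blockable (Γ : Subgroup Sol) (m₁ m₂ : Sol ⧸ Γ) : Prop :=
  ∃ B : Finset (Sol ⧸ Γ), m₁ ∉ B ∧ m₂ ∉ B ∧
    ∀ σ : ℝ → Sol, IsOneParam σ → σ 1 • m₁ = m₂ →
      ∃ t ∈ Set.Icc (0 : ℝ) 1, σ t • m₁ ∈ B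

end Sol

/-!
The `Z`-coordinate of a one-parameter subgroup `σ` is a continuous additive function, hence
`t ↦ c t` with `c = Z (σ 1)`. The `X`- and `Y`-coordinates then satisfy the cocycle equation
`f (s + t) = f s + e^{a s} f t` for `a = c` and `a = -c` respectively. Comparing this with the
equation for `t + s` gives `f t (e^{a s} - 1) = f s (e^{a t} - 1)`, which for `a ≠ 0` and `s = 1`
determines `f` from `f 1`; for `a = 0` the function is additive and continuous, hence linear.
-/

open Real

/-- The solution of the cocycle equation `f (s + t) = f s + e^{a s} f t` with `f 1 = 1`. -/
def expCocycle (a t : ℝ) : ℝ :=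
  if a = 0 then t else (exp (a * t) - 1) / (exp a - 1)

theorem exp_sub_one_ne_zero {a : ℝ} (ha : a ≠ 0) : exp a - 1 ≠ 0 :=
  sub_ne_zero.mpr fun h => ha (exp_eq_one_iff a |>.mp h)

@[simp] theorem expCocycle_one (a : ℝ) : expCocycle a 1 = 1 := by
  unfold expCocycle
  split_ifs with ha
  · rfl
  · rw [mul_one, div_self (exp_sub_one_ne_zero ha)]

theorem expCocycle_add (a s t : ℝ) :
    expCocycle a (s + t) = expCocycle a s + exp (a * s) * expCocycle a t := by
  unfold expCocycle
  split_ifs with ha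
  · simp [ha]
  · field_simp [exp_sub_one_ne_zero ha]
    rw [mul_add, exp_add]
    ring

theorem continuous_expCocycle (a : ℝ) : Continuous (expCocycle a) := by
  unfold expCocycle
  split_ifs
  · exact continuous_id
  · fun_prop

theorem Continuous.eq_mul_of_map_add {f : ℝ → ℝ} (hf : Continuous f)
    (hadd : ∀ s t, f (s + t) = f s + f t) (t : ℝ) : f t = f 1 * t := by
  simpa [mul_comm] using map_real_smul (AddMonoidHom.mk' f hadd) hf t 1

theorem Continuous.eq_mul_expCocycle {a : ℝ} {f : ℝ → ℝ} (hf : Continuous f)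
    (hcocycle : ∀ s t, f (s + t) = f s + exp (a * s) * f t) (t : ℝ) :
    f t = f 1 * expCocycle a t := by
  by_cases ha : a = 0
  · simpa [expCocycle, ha] using hf.eq_mul_of_map_add (by simpa [ha] using hcocycle) t
  · have hsymm : f t * (exp a - 1) = f 1 * (exp (a * t) - 1) := by
      have := (hcocycle t 1).symm.trans (add_comm t 1 ▸ hcocycle 1 t)
      rw [mul_one] at this
      linarith
    rw [expCocycle, if_neg ha, mul_div_assoc', eq_div_iff (exp_sub_one_ne_zero ha), hsymm]

namespace Sol

theorem continuous_X : Continuous X := continuous_fst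

theorem continuous_Y : Continuous Y :=
  (continuous_fst.comp continuous_snd : Continuous fun p : ℝ × ℝ × ℝ => p.2.1)

theorem continuous_Z : Continuous Z :=
  (continuous_snd.comp continuous_snd : Continuous fun p : ℝ × ℝ × ℝ => p.2.2)

theorem continuous_mk {f g h : ℝ → ℝ} (hf : Continuous f) (hg : Continuous g)
    (hh : Continuous h) : Continuous fun t => mk (f t) (g t) (h t) :=
  (hf.prodMk (hg.prodMk hh) : Continuous fun t => ((f t, g t, h t) : ℝ × ℝ × ℝ))

def oneParam (g : Sol) (t : ℝ) : Sol :=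
  mk (X g * expCocycle (Z g) t) (Y g * expCocycle (-Z g) t) (Z g * t)

@[simp] theorem oneParam_one (g : Sol) : oneParam g 1 = g :=
  ext (by simp [oneParam]) (by simp [oneParam]) (by simp [oneParam])

theorem isOneParam_oneParam (g : Sol) : IsOneParam (oneParam g) := by
  refine ⟨continuous_mk (continuous_const.mul (continuous_expCocycle _))
    (continuous_const.mul (continuous_expCocycle _)) (by fun_prop), fun s t => ext ?_ ?_ ?_⟩
  · simp only [oneParam, X_mul, X_mk, Z_mk, expCocycle_add]
    ring
  · simp only [oneParam, Y_mul, Y_mk, Z_mk, expCocycle_add, neg_mul]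
    ring
  · simp only [oneParam, Z_mul, Z_mk]
    ring

theorem IsOneParam.eq_oneParam {σ : ℝ → Sol} (hσ : IsOneParam σ) : σ = oneParam (σ 1) := by
  obtain ⟨hcont, hmul⟩ := hσ
  have hZ : ∀ t, Z (σ t) = Z (σ 1) * t :=
    (continuous_Z.comp hcont).eq_mul_of_map_add fun s t => by simp [hmul]
  have hX : ∀ t, X (σ t) = X (σ 1) * expCocycle (Z (σ 1)) t :=
    (continuous_X.comp hcont).eq_mul_expCocycle fun s t => by
      simp only [Function.comp_apply, hmul, X_mul, hZ s]
  have hY : ∀ t, Y (σ t) = Y (σ 1) * expCocycle (-Z (σ 1)) t :=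
    (continuous_Y.comp hcont).eq_mul_expCocycle fun s t => by
      simp only [Function.comp_apply, hmul, Y_mul, hZ s, neg_mul]
  funext t
  exact ext (hX t) (hY t) (hZ t)

end Sol

/-- every element of `Sol` lies on a unique continuous one-parameter subgroup. -/
theorem stmt1 (g : Sol) :
    ∃! σ : ℝ → Sol, Sol.IsOneParam σ ∧ σ 1 = g :=
  ⟨Sol.oneParam g, ⟨Sol.isOneParam_oneParam g, Sol.oneParam_one g⟩,
    fun _ ⟨hσ, h1⟩ => h1 ▸ hσ.eq_oneParam⟩
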